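/- arXiv:1508.00158 — 2 statements merged into one kernel-verified Lean document; each statement's English description precedes it below -/
import Mathlib

section
/- If G is interval colorable and T is a tree, then the composition G[T] is interval colorable. -/
open SimpleGraph

/-- A proper edge-coloring: edges sharing a vertex get distinct colors. -/
def EProper {V : Type*} (G : SimpleGraph V) (c : Sym2 V → ℕ) : Prop :=
  ∀ v a b, G.Adj v a → G.Adj v b → a ≠ b → c s(v, a) ≠ c s(v, b)

/-- The spectrum of a vertex: set of colors on incident edges. -/
def specS {V : Type*} (G : SimpleGraph V) (c : Sym2 V → ℕ) (v : V) : Set ℕ :=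
  {k | ∃ u, G.Adj v u ∧ c s(v, u) = k}

/-- An interval t-coloring: proper, uses exactly the colors 1..t, and each
vertex's spectrum is an interval of integers. -/
def IsIntCol {V : Type*} (G : SimpleGraph V) (c : Sym2 V → ℕ) (t : ℕ) : Prop :=
  EProper G c ∧
  (∀ e ∈ G.edgeSet, 1 ≤ c e ∧ c e ≤ t) ∧
  (∀ k, 1 ≤ k → k ≤ t → ∃ e ∈ G.edgeSet, c e = k) ∧
  (∀ v, ∀ a ∈ specS G c v, ∀ b ∈ specS G c v,
     ∀ k, a ≤ k → k ≤ b → k ∈ specS G c v)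

/-- Interval colorability. -/
def IntColorable {V : Type*} (G : SimpleGraph V) : Prop :=
  ∃ t c, IsIntCol G c t

/-- Least t admitting an interval t-coloring. -/
noncomputable def wInt {V : Type*} (G : SimpleGraph V) : ℕ :=
  sInf {t | ∃ c, IsIntCol G c t}

/-- Greatest t admitting an interval t-coloring. -/
noncomputable def WInt {V : Type*} (G : SimpleGraph V) : ℕ :=
  sSup {t | ∃ c, IsIntCol G c t}

/-- The set of values `max S(v,c)` over vertices v. -/
def maxSpecSet {V : Type*} (G : SimpleGraph V) (c : Sym2 V → ℕ) : Set ℕ :=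
  {m | ∃ v, sSup (specS G c v) = m}

/-- The sorted sequence of largest incident colors is continuous: every integer
between its minimum and maximum is attained. -/
def MaxSpecContinuous {V : Type*} (G : SimpleGraph V) (c : Sym2 V → ℕ) : Prop :=
  ∀ k, sInf (maxSpecSet G c) ≤ k → k ≤ sSup (maxSpecSet G c) → k ∈ maxSpecSet G c

/-- The composition (lexicographic product) G[H]. -/
def lexComp {V W : Type*} (G : SimpleGraph V) (H : SimpleGraph W) :
    SimpleGraph (V × W) where
  Adj a b := G.Adj a.1 b.1 ∨ (a.1 = b.1 ∧ H.Adj a.2 b.2)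
  symm := by
    constructor
    intro a b h
    rcases h with h | ⟨h1, h2⟩
    · exact Or.inl h.symm
    · exact Or.inr ⟨h1.symm, h2.symm⟩
  loopless := by
    constructor
    intro a h
    rcases h with h | ⟨_, h2⟩
    · exact G.irrefl h
    · exact H.irrefl h2

/-- The chromatic index: least number of colors in a proper edge-coloring. -/
noncomputable def chromIndex {V : Type*} (G : SimpleGraph V) : ℕ :=
  sInf {k | ∃ c, EProper G c ∧ ∀ e ∈ G.edgeSet, c e < k}

/-!
Let `n = card W`, and let `cG` be an interval coloring of `G`, with least and largest colors
`a(u)` and `b(u)` at `u`. An edge `(u, i)(u', j)` with `u ~ u'` gets color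
`n * (cG(uu') - 1) + τ(ij)`, and an edge `(u, i)(u, j)` of the copy of `T` over `u` gets
`n * b(u) + h(ij)`. Here `h` is an interval coloring of `T` whose colors at `i` are
`s i + 1, …, s i + deg i`, and `τ` is symmetric with row `i` a permutation of `s i + 1, …, s i + n`.
The colors at `(u, i)` are then `n * (a(u) - 1) + s i + 1, …, n * b(u) + s i` from the edges of
`G`, continued by those from `T`.

Rooting `T`, the edge from `v` to its parent gets color `s v + 1` and the edges to its children the
following colors; the values of `s` then form an initial segment of `ℕ`. Sorted, they start at `0`
and grow by steps `0` or `1`, and for such a sequence `squareColor` yields `τ`.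
-/

open Finset

section Rank
variable {α β : Type*} [LinearOrder β] (X : Finset α) (key : α → β)

def rankIn (a : α) : ℕ := #{b ∈ X | key b < key a}

variable {X key}

lemma rankIn_lt_rankIn {a b : α} (ha : a ∈ X) (hab : key a < key b) :
    rankIn X key a < rankIn X key b := by
  refine Finset.card_lt_card ⟨fun c hc => ?_, fun hsub => ?_⟩
  · simp only [Finset.mem_filter] at hc ⊢
    exact ⟨hc.1, hc.2.trans hab⟩
  · simpa using (Finset.mem_filter.mp (hsub (Finset.mem_filter.mpr ⟨ha, hab⟩))).2

lemma rankIn_lt_card {a : α} (ha : a ∈ X) : rankIn X key a < #X :=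
  Finset.card_lt_card ⟨Finset.filter_subset _ _, fun hsub => by simpa using hsub ha⟩

lemma rankIn_injOn (hkey : Set.InjOn key X) : Set.InjOn (rankIn X key) X := by
  intro a ha b hb hab
  rcases lt_trichotomy (key a) (key b) with h | h | h
  · exact absurd hab (rankIn_lt_rankIn ha h).ne
  · exact hkey ha hb h
  · exact absurd hab (rankIn_lt_rankIn hb h).ne'

lemma exists_rankIn_eq (hkey : Set.InjOn key X) {k : ℕ} (hk : k < #X) :
    ∃ a ∈ X, rankIn X key a = k := by
  have := Finset.surjOn_of_injOn_of_card_le (rankIn X key) (t := Finset.range #X)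
    (fun a ha => Finset.mem_range.mpr (rankIn_lt_card ha)) (rankIn_injOn hkey) (by simp)
  simpa [eq_comm] using this (Finset.mem_range.mpr hk)

end Rank

section SquareColoring
variable (n : ℕ) (σ : ℕ → ℕ)

def stepColor (x : ℕ) (high : Bool) : ℕ :=
  if σ (x + 1) = σ x + 1 then σ (x + 1) + (if high then n else 0)
  else σ n + (x + 1 - σ (x + 1))

/-- Row `p` of `(p, q) ↦ squareColor n σ (p + q)`, for `p, q < n`, meets every residue `x` mod `n`
once. Where `σ` steps up at `x`, the entry is `σ (x + 1)`, raised by `n` if `x < p`: these fill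
`(σ p, σ n]` and `(n, σ p + n]`. The remaining residues fill `(σ n, n]` in increasing order. -/
def squareColor (S : ℕ) : ℕ :=
  if S < n then stepColor n σ S false else stepColor n σ (S - n) true

variable {n σ} (hσ0 : σ 0 = 0) (hstep : ∀ p, σ p ≤ σ (p + 1) ∧ σ (p + 1) ≤ σ p + 1)
include hstep

lemma le_of_unitStep {p q : ℕ} (hpq : p ≤ q) : σ p ≤ σ q :=
  monotone_nat_of_le_succ (fun p => (hstep p).1) hpq

include hσ0

lemma le_self_of_unitStep (p : ℕ) : σ p ≤ p := by
  induction p with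
  | zero => omega
  | succ p ih => have := hstep p; omega

lemma sub_le_sub_of_unitStep {p q : ℕ} (hpq : p ≤ q) : p - σ p ≤ q - σ q :=
  monotone_nat_of_le_succ (f := fun p => p - σ p) (fun p => by
    have := hstep p; have := le_self_of_unitStep hσ0 hstep p; omega) hpq

lemma stepColor_ne_of_lt {x y : ℕ} (hx hy : Bool) (hxy : x < y) (hyn : y < n) :
    stepColor n σ x hx ≠ stepColor n σ y hy := by
  have := le_of_unitStep hstep (show x + 1 ≤ y by omega)
  have := sub_le_sub_of_unitStep hσ0 hstep (show x + 1 ≤ y by omega)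
  have := le_of_unitStep hstep (show y + 1 ≤ n by omega)
  have := sub_le_sub_of_unitStep hσ0 hstep (show y + 1 ≤ n by omega)
  have := le_self_of_unitStep hσ0 hstep x
  have := le_self_of_unitStep hσ0 hstep y
  have := hstep x
  have := hstep y
  unfold stepColor
  cases hx <;> cases hy <;> simp only [Bool.false_eq_true, if_false, if_true] <;>
    split_ifs <;> omega

lemma stepColor_injective {x y : ℕ} {hx hy : Bool} (hxn : x < n) (hyn : y < n)
    (h : stepColor n σ x hx = stepColor n σ y hy) : x = y := by
  rcases lt_trichotomy x y with hxy | hxy | hxy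
  · exact absurd h (stepColor_ne_of_lt hσ0 hstep hx hy hxy hyn)
  · exact hxy
  · exact absurd h.symm (stepColor_ne_of_lt hσ0 hstep hy hx hxy hxn)

lemma squareColor_add_injective {p q q' : ℕ} (hp : p < n) (hq : q < n) (hq' : q' < n)
    (h : squareColor n σ (p + q) = squareColor n σ (p + q')) : q = q' := by
  unfold squareColor at h
  split_ifs at h <;> have := stepColor_injective hσ0 hstep (by omega) (by omega) h <;> omega

lemma squareColor_add_mem {p q : ℕ} (hp : p < n) (hq : q < n) :
    σ p + 1 ≤ squareColor n σ (p + q) ∧ squareColor n σ (p + q) ≤ σ p + n := by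
  have := le_self_of_unitStep hσ0 hstep p
  have := le_self_of_unitStep hσ0 hstep n
  have := le_of_unitStep hstep hp.le
  unfold squareColor stepColor
  by_cases hS : p + q < n
  · have := le_of_unitStep hstep (show p ≤ p + q by omega)
    have := le_self_of_unitStep hσ0 hstep (p + q)
    have := le_self_of_unitStep hσ0 hstep (p + q + 1)
    have := sub_le_sub_of_unitStep hσ0 hstep (show p + q + 1 ≤ n by omega)
    have := hstep (p + q)
    simp only [if_pos hS, Bool.false_eq_true, if_false]
    split_ifs <;> omega
  · have := le_of_unitStep hstep (show p + q - n + 1 ≤ p by omega)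
    have := le_self_of_unitStep hσ0 hstep (p + q - n)
    have := sub_le_sub_of_unitStep hσ0 hstep (show p + q - n + 1 ≤ n by omega)
    have := hstep (p + q - n)
    simp only [if_neg hS, if_true]
    split_ifs <;> omega

end SquareColoring

noncomputable section SortedStarts
variable {W : Type*} [Fintype W] (s : W → ℕ)

def sortPos (v : W) : ℕ := rankIn univ (fun w => toLex (s w, Fintype.equivFin W w)) v

/-- The `p`-th smallest value of `s`, counting from `0`, and the largest one for `p ≥ card W`. -/
def sortedStart (p : ℕ) : ℕ := ({w | sortPos s w ≤ p} : Finset W).sup s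

lemma sortPos_lt_card (v : W) : sortPos s v < Fintype.card W :=
  rankIn_lt_card (mem_univ v)

variable {s}

lemma sortPos_injective : Function.Injective (sortPos s) := fun v w h =>
  rankIn_injOn (fun _ _ _ _ hab => (Fintype.equivFin W).injective (congrArg (·.2) hab))
    (mem_univ v) (mem_univ w) h

lemma sortPos_lt_sortPos {v w : W} (h : s v < s w) : sortPos s v < sortPos s w :=
  rankIn_lt_rankIn (mem_univ v) (Prod.Lex.toLex_lt_toLex.mpr (Or.inl h))

lemma le_of_sortPos_le {v w : W} (h : sortPos s v ≤ sortPos s w) : s v ≤ s w :=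
  not_lt.mp fun hlt => (sortPos_lt_sortPos hlt).not_ge h

lemma sortedStart_sortPos (v : W) : sortedStart s (sortPos s v) = s v :=
  le_antisymm (Finset.sup_le fun _ hw => le_of_sortPos_le (Finset.mem_filter.mp hw).2)
    (Finset.le_sup (f := s) (Finset.mem_filter.mpr ⟨mem_univ v, le_rfl⟩))

variable (hs : ∀ v, ∀ k ≤ s v, ∃ w, s w = k)
include hs

lemma sortedStart_zero : sortedStart s 0 = 0 := by
  refine Nat.eq_zero_of_le_zero (Finset.sup_le fun v hv => ?_)
  obtain ⟨z, hz⟩ := hs v 0 (Nat.zero_le _)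
  exact hz ▸ le_of_sortPos_le ((Finset.mem_filter.mp hv).2.trans (Nat.zero_le _))

lemma sortedStart_unitStep (p : ℕ) :
    sortedStart s p ≤ sortedStart s (p + 1) ∧ sortedStart s (p + 1) ≤ sortedStart s p + 1 := by
  refine ⟨Finset.sup_mono fun w hw => Finset.mem_filter.mpr
    ⟨mem_univ w, (Finset.mem_filter.mp hw).2.trans p.le_succ⟩, ?_⟩
  by_contra! hgap
  have hne : ({w | sortPos s w ≤ p + 1} : Finset W).Nonempty := by
    rw [Finset.nonempty_iff_ne_empty]
    intro h
    simp [sortedStart, h] at hgap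
  obtain ⟨v, hv, hvmax⟩ := Finset.exists_mem_eq_sup _ hne s
  change sortedStart s (p + 1) = s v at hvmax
  obtain ⟨w, hw⟩ := hs v (sortedStart s p + 1) (by omega)
  have hwv : sortPos s w < sortPos s v := sortPos_lt_sortPos (by omega)
  have hwp : s w ≤ sortedStart s p :=
    Finset.le_sup (f := s) (Finset.mem_filter.mpr ⟨mem_univ w, by
      have := (Finset.mem_filter.mp hv).2; omega⟩)
  omega

theorem exists_sym2_coloring_range_eq_Icc :
    ∃ τ : Sym2 W → ℕ, ∀ i, Function.Injective (fun j => τ s(i, j)) ∧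
      Set.range (fun j => τ s(i, j)) = Set.Icc (s i + 1) (s i + Fintype.card W) := by
  set n := Fintype.card W
  let τ : Sym2 W → ℕ :=
    Sym2.lift ⟨fun i j => squareColor n (sortedStart s) (sortPos s i + sortPos s j),
      fun i j => by dsimp only; rw [add_comm]⟩
  have hσ0 := sortedStart_zero hs
  have hσ := sortedStart_unitStep hs
  refine ⟨τ, fun i => ?_⟩
  have hinj : Function.Injective (fun j => τ s(i, j)) := fun j j' h =>
    sortPos_injective (s := s) (squareColor_add_injective hσ0 hσ
      (sortPos_lt_card s i) (sortPos_lt_card s j) (sortPos_lt_card s j') h)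
  have hmem : ∀ j, τ s(i, j) ∈ Finset.Icc (s i + 1) (s i + n) := fun j => by
    have := squareColor_add_mem hσ0 hσ (sortPos_lt_card s i) (sortPos_lt_card s j)
    rw [sortedStart_sortPos] at this
    simpa [τ] using this
  have himage : univ.image (fun j => τ s(i, j)) = Finset.Icc (s i + 1) (s i + n) :=
    Finset.eq_of_subset_of_card_le (Finset.image_subset_iff.mpr fun j _ => hmem j)
      (by rw [Finset.card_image_of_injective _ hinj]; simp [n])
  refine ⟨hinj, ?_⟩
  rw [← Set.image_univ, ← Finset.coe_univ, ← Finset.coe_image, himage, Finset.coe_Icc]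

end SortedStarts

namespace SimpleGraph.IsTree
variable {W : Type*} {T : SimpleGraph W} (hT : T.IsTree) (r : W)

noncomputable def pathTo (v : W) : T.Walk v r := (hT.existsUnique_path v r).choose

noncomputable def parent (v : W) : W := (hT.pathTo r v).snd

variable {r}

lemma isPath_pathTo (v : W) : (hT.pathTo r v).IsPath :=
  (hT.existsUnique_path v r).choose_spec.1

lemma eq_pathTo {v : W} {p : T.Walk v r} (hp : p.IsPath) : p = hT.pathTo r v :=
  (hT.existsUnique_path v r).choose_spec.2 p hp

lemma adj_parent {v : W} (hv : v ≠ r) : T.Adj v (hT.parent r v) :=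
  (hT.pathTo r v).adj_snd (Walk.not_nil_of_ne hv)

lemma length_pathTo_parent {v : W} (hv : v ≠ r) :
    (hT.pathTo r (hT.parent r v)).length + 1 = (hT.pathTo r v).length := by
  have htail : (hT.pathTo r v).tail = hT.pathTo r (hT.parent r v) :=
    hT.eq_pathTo (hT.isPath_pathTo v).tail
  rw [← htail]
  exact Walk.length_tail_add_one (Walk.not_nil_of_ne hv)

variable (r) in
lemma parent_eq_or_parent_eq {u v : W} (h : T.Adj u v) :
    (u ≠ r ∧ hT.parent r u = v) ∨ (v ≠ r ∧ hT.parent r v = u) := by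
  by_cases hv : v ∈ (hT.pathTo r u).support
  · refine Or.inl ⟨?_, (hT.isAcyclic.eq_snd_of_adj_start (hT.isPath_pathTo u) h hv).symm⟩
    rintro rfl
    rw [← hT.eq_pathTo Walk.IsPath.nil] at hv
    simp only [Walk.support_nil, List.mem_singleton] at hv
    exact h.ne hv.symm
  · have hpath := (hT.isPath_pathTo u).cons (h := h.symm) hv
    refine Or.inr ⟨fun hvr => hv (hvr ▸ Walk.end_mem_support _), ?_⟩
    rw [parent, ← hT.eq_pathTo hpath, Walk.snd_cons]

variable [Fintype W] [DecidableEq W] (r)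

noncomputable def children (v : W) : Finset W := {c | c ≠ r ∧ hT.parent r c = v}

noncomputable def siblingRank (c : W) : ℕ :=
  rankIn (hT.children r (hT.parent r c)) (Fintype.equivFin W) c

/-- The edge to the parent of `v` gets color `start v + 1`; the edges to the children follow it
in the order of `siblingRank`, so that the colors at every vertex are consecutive. -/
noncomputable def start (v : W) : ℕ :=
  if hv : v = r then 0
  else start (hT.parent r v) + (if hT.parent r v = r then 0 else 1) + hT.siblingRank r v
termination_by (hT.pathTo r v).length
decreasing_by have := hT.length_pathTo_parent hv; omega

-- On an edge, the larger `start` is the child's, so the edge gets the child's `start` plus one.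
noncomputable def treeColor : Sym2 W → ℕ :=
  Sym2.lift ⟨fun v w => max (hT.start r v) (hT.start r w) + 1,
    fun v w => by dsimp only; rw [max_comm]⟩

variable {r}

lemma mem_children {c v : W} : c ∈ hT.children r v ↔ c ≠ r ∧ hT.parent r c = v := by
  simp [children]

lemma start_root : hT.start r r = 0 := by
  rw [start, dif_pos rfl]

lemma start_of_mem_children {c v : W} (hc : c ∈ hT.children r v) :
    hT.start r c = hT.start r v + (if v = r then 0 else 1) + hT.siblingRank r c := by
  obtain ⟨hcr, rfl⟩ := (hT.mem_children).mp hc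
  rw [start, dif_neg hcr]

lemma siblingRank_lt_card {c v : W} (hc : c ∈ hT.children r v) :
    hT.siblingRank r c < #(hT.children r v) := by
  obtain ⟨-, rfl⟩ := (hT.mem_children).mp hc
  exact rankIn_lt_card hc

lemma siblingRank_injOn (v : W) : Set.InjOn (hT.siblingRank r) (hT.children r v) := by
  intro c hc c' hc' h
  obtain ⟨-, rfl⟩ := (hT.mem_children).mp hc
  obtain ⟨-, hc'v⟩ := (hT.mem_children).mp hc'
  rw [siblingRank, siblingRank, hc'v] at h
  exact rankIn_injOn (Fintype.equivFin W).injective.injOn hc (hc'v ▸ hc') h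

lemma exists_siblingRank_eq {v : W} {k : ℕ} (hk : k < #(hT.children r v)) :
    ∃ c ∈ hT.children r v, hT.siblingRank r c = k := by
  obtain ⟨c, hc, hck⟩ := exists_rankIn_eq (Fintype.equivFin W).injective.injOn hk
  obtain ⟨-, hcv⟩ := (hT.mem_children).mp hc
  exact ⟨c, hc, by rw [siblingRank, hcv, hck]⟩

lemma parent_mem_children {v : W} (hv : v ≠ r) : v ∈ hT.children r (hT.parent r v) :=
  (hT.mem_children).mpr ⟨hv, rfl⟩

variable (r) in
lemma adj_iff_mem_children_or_eq_parent {v w : W} :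
    T.Adj v w ↔ w ∈ hT.children r v ∨ (v ≠ r ∧ w = hT.parent r v) := by
  refine ⟨fun h => ?_, ?_⟩
  · rcases hT.parent_eq_or_parent_eq r h with ⟨hv, hw⟩ | ⟨hw, hv⟩
    · exact Or.inr ⟨hv, hw.symm⟩
    · exact Or.inl ((hT.mem_children).mpr ⟨hw, hv⟩)
  · rintro (hc | ⟨hv, rfl⟩)
    · obtain ⟨hw, rfl⟩ := (hT.mem_children).mp hc
      exact (hT.adj_parent hw).symm
    · exact hT.adj_parent hv

lemma treeColor_of_mem_children {c v : W} (hc : c ∈ hT.children r v) :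
    hT.treeColor r s(v, c) = hT.start r c + 1 := by
  simp only [treeColor, Sym2.lift_mk, hT.start_of_mem_children hc]
  omega

lemma treeColor_parent {v : W} (hv : v ≠ r) :
    hT.treeColor r s(v, hT.parent r v) = hT.start r v + 1 := by
  rw [Sym2.eq_swap, hT.treeColor_of_mem_children (hT.parent_mem_children hv)]

lemma specS_treeColor (v : W) :
    specS T (hT.treeColor r) v = Set.Icc (hT.start r v + 1)
      (hT.start r v + (if v = r then 0 else 1) + #(hT.children r v)) := by
  ext k
  simp only [Set.mem_Icc]
  constructor
  · rintro ⟨w, hvw, rfl⟩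
    rcases (hT.adj_iff_mem_children_or_eq_parent r).mp hvw with hc | ⟨hv, rfl⟩
    · have := hT.siblingRank_lt_card hc
      rw [hT.treeColor_of_mem_children hc, hT.start_of_mem_children hc]
      omega
    · rw [hT.treeColor_parent hv, if_neg hv]
      omega
  · rintro ⟨hk1, hk2⟩
    by_cases hpar : v ≠ r ∧ k = hT.start r v + 1
    · exact ⟨_, hT.adj_parent hpar.1, by rw [hT.treeColor_parent hpar.1, hpar.2]⟩
    have hδ : (if v = r then 0 else 1) = 0 ∨
        ((if v = r then 0 else 1) = 1 ∧ k ≠ hT.start r v + 1) := by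
      by_cases hv : v = r
      · simp [hv]
      · exact Or.inr ⟨if_neg hv, fun hk => hpar ⟨hv, hk⟩⟩
    obtain ⟨c, hc, hck⟩ := hT.exists_siblingRank_eq (r := r) (v := v)
      (k := k - hT.start r v - (if v = r then 0 else 1) - 1) (by omega)
    refine ⟨c, (hT.adj_iff_mem_children_or_eq_parent r).mpr (Or.inl hc), ?_⟩
    rw [hT.treeColor_of_mem_children hc, hT.start_of_mem_children hc, hck]
    omega

lemma eProper_treeColor : EProper T (hT.treeColor r) := by
  intro v a b ha hb hab heq
  rcases (hT.adj_iff_mem_children_or_eq_parent r).mp ha with hca | ⟨hv, rfl⟩ <;>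
    rcases (hT.adj_iff_mem_children_or_eq_parent r).mp hb with hcb | ⟨hv', rfl⟩
  · rw [hT.treeColor_of_mem_children hca, hT.treeColor_of_mem_children hcb,
      hT.start_of_mem_children hca, hT.start_of_mem_children hcb] at heq
    exact hab (hT.siblingRank_injOn v hca hcb (by omega))
  · rw [hT.treeColor_of_mem_children hca, hT.treeColor_parent hv',
      hT.start_of_mem_children hca, if_neg hv'] at heq
    omega
  · rw [hT.treeColor_of_mem_children hcb, hT.treeColor_parent hv,
      hT.start_of_mem_children hcb, if_neg hv] at heq
    omega
  · exact hab rfl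

lemma exists_start_add_one_eq {v : W} (hv : v ≠ r) (hpos : 0 < hT.start r v) :
    ∃ w ≠ r, hT.start r w + 1 = hT.start r v := by
  have hc := hT.parent_mem_children hv
  have hs := hT.start_of_mem_children hc
  by_cases hrank : hT.siblingRank r v = 0
  · by_cases hp : hT.parent r v = r
    · rw [hp, hT.start_root, hrank] at hs
      simp only [↓reduceIte, add_zero] at hs
      omega
    · exact ⟨_, hp, by rw [hs, if_neg hp, hrank]⟩
  · obtain ⟨c, hc', hck⟩ :=
      hT.exists_siblingRank_eq (r := r) (v := hT.parent r v) (k := hT.siblingRank r v - 1)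
      (by have := hT.siblingRank_lt_card hc; omega)
    refine ⟨c, ((hT.mem_children).mp hc').1, ?_⟩
    rw [hT.start_of_mem_children hc', hs, hck]
    omega

lemma exists_start_eq_of_ne {v : W} (hv : v ≠ r) {k : ℕ} (hk : k ≤ hT.start r v) :
    ∃ w ≠ r, hT.start r w = k := by
  obtain ⟨d, hd⟩ := Nat.exists_eq_add_of_le hk
  induction d generalizing v with
  | zero => exact ⟨v, hv, hd⟩
  | succ d ih =>
    obtain ⟨w, hw, hwv⟩ := hT.exists_start_add_one_eq hv (by omega)
    exact ih hw (by omega) (by omega)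

lemma exists_start_eq {v : W} {k : ℕ} (hk : k ≤ hT.start r v) : ∃ w, hT.start r w = k := by
  by_cases hv : v = r
  · rw [hv, hT.start_root, Nat.le_zero] at hk
    exact ⟨r, by rw [hT.start_root, hk]⟩
  · obtain ⟨w, -, hw⟩ := hT.exists_start_eq_of_ne hv hk
    exact ⟨w, hw⟩

lemma exists_treeColor_eq {e : Sym2 W} (he : e ∈ T.edgeSet) :
    ∃ v ≠ r, hT.treeColor r e = hT.start r v + 1 := by
  induction e using Sym2.ind with
  | _ v w =>
    rcases hT.parent_eq_or_parent_eq r (T.mem_edgeSet.mp he) with ⟨hv, rfl⟩ | ⟨hw, rfl⟩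
    · exact ⟨v, hv, hT.treeColor_parent hv⟩
    · exact ⟨w, hw, by rw [Sym2.eq_swap, hT.treeColor_parent hw]⟩

variable (r) in
noncomputable def topColor : ℕ := ({v | v ≠ r} : Finset W).sup (hT.start r · + 1)

lemma start_add_one_le_topColor {v : W} (hv : v ≠ r) : hT.start r v + 1 ≤ hT.topColor r :=
  Finset.le_sup (f := (hT.start r · + 1)) (by simpa using hv)

lemma start_le_topColor (v : W) : hT.start r v ≤ hT.topColor r := by
  by_cases hv : v = r
  · rw [hv, hT.start_root]
    exact Nat.zero_le _
  · exact (Nat.le_succ _).trans (hT.start_add_one_le_topColor hv)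

lemma isIntCol_treeColor : IsIntCol T (hT.treeColor r) (hT.topColor r) := by
  refine ⟨hT.eProper_treeColor, fun e he => ?_, fun k hk₁ hk₂ => ?_, ?_⟩
  · obtain ⟨v, hv, hev⟩ := hT.exists_treeColor_eq (r := r) he
    have := hT.start_add_one_le_topColor hv
    omega
  · have hne : ({v | v ≠ r} : Finset W).Nonempty := by
      rw [Finset.nonempty_iff_ne_empty]
      intro h
      simp only [topColor, h, sup_empty, Nat.bot_eq_zero] at hk₂
      omega
    obtain ⟨c, hc, hcM⟩ := Finset.exists_mem_eq_sup _ hne (hT.start r · + 1)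
    change hT.topColor r = _ at hcM
    obtain ⟨w, hw, hwk⟩ := hT.exists_start_eq_of_ne (by simpa using hc) (k := k - 1) (by omega)
    exact ⟨_, hT.adj_parent hw, by rw [hT.treeColor_parent hw]; omega⟩
  · intro v a ha b hb k hak hkb
    rw [hT.specS_treeColor] at ha hb ⊢
    exact ⟨ha.1.trans hak, hkb.trans hb.2⟩

include hT in
theorem exists_isIntCol_specS_eq_Icc :
    ∃ (M : ℕ) (h : Sym2 W → ℕ) (s : W → ℕ), IsIntCol T h M ∧
      (∀ v, ∃ e, specS T h v = Set.Icc (s v + 1) e) ∧ (∀ v, s v ≤ M) ∧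
      (∀ v, ∀ k ≤ s v, ∃ w, s w = k) := by
  obtain ⟨r⟩ := hT.connected.nonempty
  exact ⟨_, _, _, hT.isIntCol_treeColor (r := r), fun v => ⟨_, hT.specS_treeColor v⟩,
    hT.start_le_topColor, fun _ _ hk => hT.exists_start_eq hk⟩

end SimpleGraph.IsTree

lemma exists_mul_add_lt_le_iff {n s A B k : ℕ} (hn : 0 < n) :
    (∃ q, A ≤ q ∧ q ≤ B ∧ n * q + s < k ∧ k ≤ n * q + s + n) ↔
      n * A + s < k ∧ k ≤ n * B + s + n := by
  constructor
  · rintro ⟨q, hAq, hqB, hk1, hk2⟩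
    have := Nat.mul_le_mul_left n hAq
    have := Nat.mul_le_mul_left n hqB
    omega
  · rintro ⟨hk1, hk2⟩
    have hdiv := Nat.div_add_mod (k - s - 1) n
    have hmod := Nat.mod_lt (k - s - 1) hn
    refine ⟨(k - s - 1) / n, ?_, ?_, by omega, by omega⟩
    · by_contra! h
      have := Nat.mul_le_mul_left n (show (k - s - 1) / n + 1 ≤ A by omega)
      rw [Nat.mul_succ] at this
      omega
    · by_contra! h
      have := Nat.mul_le_mul_left n (show B + 1 ≤ (k - s - 1) / n by omega)
      rw [Nat.mul_succ] at this
      omega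

lemma mul_sub_one_add_self {n c : ℕ} (hc : 1 ≤ c) : n * (c - 1) + n = n * c := by
  rw [← Nat.mul_succ, Nat.succ_eq_add_one, Nat.sub_add_cancel hc]

lemma eq_of_mul_add_eq {n s q q' x x' : ℕ} (hx : s < x ∧ x ≤ s + n) (hx' : s < x' ∧ x' ≤ s + n)
    (h : n * q + x = n * q' + x') : q = q' := by
  by_contra hne
  rcases Nat.lt_or_gt_of_ne hne with hlt | hlt
  · have := Nat.mul_le_mul_left n (Nat.succ_le_of_lt hlt)
    rw [Nat.mul_succ] at this
    omega
  · have := Nat.mul_le_mul_left n (Nat.succ_le_of_lt hlt)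
    rw [Nat.mul_succ] at this
    omega

section IsIntCol
variable {V : Type*} {G : SimpleGraph V} {c : Sym2 V → ℕ} {t : ℕ}

lemma IsIntCol.bddAbove_specS (hc : IsIntCol G c t) (u : V) : BddAbove (specS G c u) :=
  ⟨t, by rintro _ ⟨u', hu', rfl⟩; exact (hc.2.1 _ (G.mem_edgeSet.mpr hu')).2⟩

lemma IsIntCol.sSup_specS_le (hc : IsIntCol G c t) (u : V) : sSup (specS G c u) ≤ t :=
  csSup_le' (by rintro _ ⟨u', hu', rfl⟩; exact (hc.2.1 _ (G.mem_edgeSet.mpr hu')).2)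

lemma IsIntCol.le_sSup_specS (hc : IsIntCol G c t) {u u' : V} (hu : G.Adj u u') :
    c s(u, u') ≤ sSup (specS G c u) :=
  le_csSup (hc.bddAbove_specS u) ⟨u', hu, rfl⟩

lemma IsIntCol.specS_eq_Icc (hc : IsIntCol G c t) {u u' : V} (hu : G.Adj u u') :
    specS G c u = Set.Icc (sInf (specS G c u)) (sSup (specS G c u)) := by
  have hne : (specS G c u).Nonempty := ⟨_, u', hu, rfl⟩
  ext k
  exact ⟨fun hk => ⟨Nat.sInf_le hk, le_csSup (hc.bddAbove_specS u) hk⟩, fun hk =>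
    hc.2.2.2 u _ (Nat.sInf_mem hne) _ (Nat.sSup_mem hne (hc.bddAbove_specS u)) k hk.1 hk.2⟩

lemma IsIntCol.one_le_sInf_specS (hc : IsIntCol G c t) {u u' : V} (hu : G.Adj u u') :
    1 ≤ sInf (specS G c u) := by
  obtain ⟨u'', hu'', hk⟩ := Nat.sInf_mem (s := specS G c u) ⟨_, u', hu, rfl⟩
  rw [← hk]
  exact (hc.2.1 _ (G.mem_edgeSet.mpr hu'')).1

lemma IsIntCol.exists_sSup_specS_eq [Nonempty V] (hc : IsIntCol G c t) :
    ∃ u, sSup (specS G c u) = t := by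
  rcases Nat.eq_zero_or_pos t with rfl | ht
  · exact ⟨Classical.arbitrary V, Nat.le_zero.mp (hc.sSup_specS_le _)⟩
  obtain ⟨e, he, hce⟩ := hc.2.2.1 t ht le_rfl
  induction e using Sym2.ind with
  | _ u u' =>
    exact ⟨u, le_antisymm (hc.sSup_specS_le u) (hce ▸ hc.le_sSup_specS (G.mem_edgeSet.mp he))⟩

lemma IsIntCol.mul_sub_one_add_le_mul_sSup (hc : IsIntCol G c t) {u u' : V} (hu : G.Adj u u')
    (n : ℕ) : n * (c s(u, u') - 1) + n ≤ n * sSup (specS G c u) := by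
  rw [mul_sub_one_add_self (hc.2.1 _ (G.mem_edgeSet.mpr hu)).1]
  exact Nat.mul_le_mul_left n (hc.le_sSup_specS hu)

end IsIntCol

section Composition
variable {V W : Type*} [DecidableEq V] [Fintype W] {G : SimpleGraph V} {T : SimpleGraph W}

variable (G) in
noncomputable def compColoring (cG : Sym2 V → ℕ) (h τ : Sym2 W → ℕ) : Sym2 (V × W) → ℕ :=
  Sym2.lift ⟨fun p q =>
    if p.1 = q.1 then Fintype.card W * sSup (specS G cG p.1) + h s(p.2, q.2)
    else Fintype.card W * (cG s(p.1, q.1) - 1) + τ s(p.2, q.2), fun p q => by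
      by_cases hpq : p.1 = q.1
      · simp only [hpq, if_true]
        rw [Sym2.eq_swap]
      · simp only [hpq, Ne.symm hpq, if_false]
        rw [Sym2.eq_swap, Sym2.eq_swap (a := q.2)]⟩

variable {cG : Sym2 V → ℕ} {h τ : Sym2 W → ℕ}

lemma compColoring_of_ne {u u' : V} (hu : u ≠ u') (i j : W) :
    compColoring G cG h τ s((u, i), (u', j)) =
      Fintype.card W * (cG s(u, u') - 1) + τ s(i, j) := by
  simp [compColoring, hu]

lemma compColoring_same (u : V) (i j : W) :
    compColoring G cG h τ s((u, i), (u, j)) =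
      Fintype.card W * sSup (specS G cG u) + h s(i, j) := by
  simp [compColoring]

lemma mem_specS_compColoring {u : V} {i : W} {s e k : ℕ} (hspec : specS T h i = Set.Icc (s + 1) e)
    (hτ : Set.range (fun j => τ s(i, j)) = Set.Icc (s + 1) (s + Fintype.card W)) :
    k ∈ specS (lexComp G T) (compColoring G cG h τ) (u, i) ↔
      (∃ c ∈ specS G cG u, Fintype.card W * (c - 1) + s < k ∧
        k ≤ Fintype.card W * (c - 1) + s + Fintype.card W) ∨
      (Fintype.card W * sSup (specS G cG u) + s < k ∧
        k ≤ Fintype.card W * sSup (specS G cG u) + e) := by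
  constructor
  · rintro ⟨⟨u', j⟩, hG | ⟨rfl, hT⟩, rfl⟩ <;> dsimp only at *
    · have : τ s(i, j) ∈ Set.Icc (s + 1) (s + Fintype.card W) := hτ ▸ ⟨j, rfl⟩
      rw [compColoring_of_ne hG.ne]
      exact Or.inl ⟨cG s(u, u'), ⟨u', hG, rfl⟩, by simp only [Set.mem_Icc] at this; omega⟩
    · have : h s(i, j) ∈ Set.Icc (s + 1) e := hspec ▸ ⟨j, hT, rfl⟩
      rw [compColoring_same]
      exact Or.inr (by simp only [Set.mem_Icc] at this; omega)
  · rintro (⟨_, ⟨u', hG, rfl⟩, hk⟩ | hk)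
    · obtain ⟨j, hj⟩ : k - Fintype.card W * (cG s(u, u') - 1) ∈ Set.range (fun j => τ s(i, j)) := by
        rw [hτ]; exact ⟨by omega, by omega⟩
      refine ⟨(u', j), Or.inl hG, ?_⟩
      rw [compColoring_of_ne hG.ne]
      simp only at hj
      omega
    · obtain ⟨j, hT, hj⟩ : k - Fintype.card W * sSup (specS G cG u) ∈ specS T h i := by
        rw [hspec]; exact ⟨by omega, by omega⟩
      refine ⟨(u, j), Or.inr ⟨rfl, hT⟩, ?_⟩
      rw [compColoring_same, hj]
      omega

variable {t : ℕ}

lemma specS_compColoring_interval (hcG : IsIntCol G cG t) {u : V} {i : W} {s e : ℕ}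
    (hspec : specS T h i = Set.Icc (s + 1) e)
    (hτ : Set.range (fun j => τ s(i, j)) = Set.Icc (s + 1) (s + Fintype.card W)) :
    ∀ a ∈ specS (lexComp G T) (compColoring G cG h τ) (u, i),
      ∀ b ∈ specS (lexComp G T) (compColoring G cG h τ) (u, i),
      ∀ k, a ≤ k → k ≤ b → k ∈ specS (lexComp G T) (compColoring G cG h τ) (u, i) := by
  intro k₁ hk₁ k₂ hk₂ k hk₁k hkk₂
  rw [mem_specS_compColoring hspec hτ] at hk₁ hk₂ ⊢
  by_cases hu : ∃ u', G.Adj u u'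
  · obtain ⟨u', hu'⟩ := hu
    have hA := hcG.one_le_sInf_specS hu'
    have hGu := hcG.specS_eq_Icc hu'
    set A := sInf (specS G cG u)
    set B := sSup (specS G cG u)
    have hmem : cG s(u, u') ∈ Set.Icc A B := hGu ▸ ⟨u', hu', rfl⟩
    have hB : 1 ≤ B := hA.trans (hmem.1.trans hmem.2)
    have hblocks : ∀ k, (∃ c ∈ specS G cG u, Fintype.card W * (c - 1) + s < k ∧
        k ≤ Fintype.card W * (c - 1) + s + Fintype.card W) ↔
        Fintype.card W * (A - 1) + s < k ∧ k ≤ Fintype.card W * (B - 1) + s + Fintype.card W := by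
      intro k
      rw [← exists_mul_add_lt_le_iff (Fintype.card_pos_iff.mpr ⟨i⟩), hGu]
      constructor
      · rintro ⟨c, ⟨hAc, hcB⟩, hk⟩
        exact ⟨c - 1, by omega, by omega, hk⟩
      · rintro ⟨q, hAq, hqB, hk⟩
        exact ⟨q + 1, ⟨by omega, by omega⟩, hk⟩
    simp only [hblocks] at hk₁ hk₂ ⊢
    have := mul_sub_one_add_self (n := Fintype.card W) hB
    omega
  · have hnone : ∀ c, c ∉ specS G cG u := fun c ⟨u', hu', _⟩ => hu ⟨u', hu'⟩
    simp only [hnone, false_and, exists_false, false_or] at hk₁ hk₂ ⊢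
    omega

lemma eProper_compColoring (hcG : IsIntCol G cG t) (hh : EProper T h) {s : W → ℕ}
    (hspec : ∀ i, ∃ e, specS T h i = Set.Icc (s i + 1) e)
    (hτ : ∀ i, Function.Injective (fun j => τ s(i, j)) ∧
      Set.range (fun j => τ s(i, j)) = Set.Icc (s i + 1) (s i + Fintype.card W)) :
    EProper (lexComp G T) (compColoring G cG h τ) := by
  rintro ⟨u, i⟩ ⟨u₁, j₁⟩ ⟨u₂, j₂⟩ h₁ h₂ hne heq
  have hτmem : ∀ j, s i < τ s(i, j) ∧ τ s(i, j) ≤ s i + Fintype.card W := fun j => by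
    have : τ s(i, j) ∈ Set.Icc (s i + 1) (s i + Fintype.card W) := (hτ i).2 ▸ ⟨j, rfl⟩
    exact ⟨this.1, this.2⟩
  have hhmem : ∀ j, T.Adj i j → s i < h s(i, j) := fun j hj => by
    obtain ⟨e, he⟩ := hspec i
    have : h s(i, j) ∈ Set.Icc (s i + 1) e := he ▸ ⟨j, hj, rfl⟩
    exact this.1
  rcases h₁ with hG₁ | ⟨rfl, hT₁⟩ <;> rcases h₂ with hG₂ | ⟨rfl, hT₂⟩ <;> dsimp only at *
  · rw [compColoring_of_ne hG₁.ne, compColoring_of_ne hG₂.ne] at heq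
    have hq := eq_of_mul_add_eq (hτmem j₁) (hτmem j₂) heq
    have hc₁ := (hcG.2.1 _ (G.mem_edgeSet.mpr hG₁)).1
    have hc₂ := (hcG.2.1 _ (G.mem_edgeSet.mpr hG₂)).1
    obtain rfl : u₁ = u₂ := by
      by_contra hu
      exact hcG.1 u u₁ u₂ hG₁ hG₂ hu (by omega)
    obtain rfl : j₁ = j₂ := (hτ i).1 (by dsimp only; omega)
    exact hne rfl
  · rw [compColoring_of_ne hG₁.ne, compColoring_same] at heq
    have := hcG.mul_sub_one_add_le_mul_sSup hG₁ (Fintype.card W)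
    have := hτmem j₁
    have := hhmem j₂ hT₂
    omega
  · rw [compColoring_same, compColoring_of_ne hG₂.ne] at heq
    have := hcG.mul_sub_one_add_le_mul_sSup hG₂ (Fintype.card W)
    have := hτmem j₂
    have := hhmem j₁ hT₁
    omega
  · rw [compColoring_same, compColoring_same] at heq
    exact hh i j₁ j₂ hT₁ hT₂ (fun hj => hne (hj ▸ rfl)) (by omega)

lemma compColoring_mem_Icc (hcG : IsIntCol G cG t) {M : ℕ} (hh : IsIntCol T h M) {s : W → ℕ}
    (hsM : ∀ i, s i ≤ M)
    (hτ : ∀ i, Set.range (fun j => τ s(i, j)) = Set.Icc (s i + 1) (s i + Fintype.card W))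
    {e : Sym2 (V × W)} (he : e ∈ (lexComp G T).edgeSet) :
    1 ≤ compColoring G cG h τ e ∧ compColoring G cG h τ e ≤ Fintype.card W * t + M := by
  induction e using Sym2.ind with
  | _ p q =>
    obtain ⟨u, i⟩ := p
    obtain ⟨u', j⟩ := q
    have := Nat.mul_le_mul_left (Fintype.card W) (hcG.sSup_specS_le u)
    rcases (lexComp G T).mem_edgeSet.mp he with hG | ⟨rfl, hT⟩ <;> dsimp only at *
    · have : τ s(i, j) ∈ Set.Icc (s i + 1) (s i + Fintype.card W) := hτ i ▸ ⟨j, rfl⟩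
      have := hcG.mul_sub_one_add_le_mul_sSup hG (Fintype.card W)
      have := hsM i
      rw [compColoring_of_ne hG.ne]
      simp only [Set.mem_Icc] at *
      omega
    · have := hh.2.1 _ (T.mem_edgeSet.mpr hT)
      rw [compColoring_same]
      omega

lemma exists_compColoring_eq [Nonempty V] (hcG : IsIntCol G cG t) {M : ℕ}
    (hh : IsIntCol T h M) {s : W → ℕ} (hs0 : ∃ i, s i = 0)
    (hτ : ∀ i, Set.range (fun j => τ s(i, j)) = Set.Icc (s i + 1) (s i + Fintype.card W))
    {k : ℕ} (hk₁ : 1 ≤ k) (hk₂ : k ≤ Fintype.card W * t + M) :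
    ∃ e ∈ (lexComp G T).edgeSet, compColoring G cG h τ e = k := by
  obtain ⟨i₀, hi₀⟩ := hs0
  by_cases hk : k ≤ Fintype.card W * t
  · have ht : 1 ≤ t := Nat.pos_of_ne_zero (by rintro rfl; omega)
    have := mul_sub_one_add_self (n := Fintype.card W) ht
    obtain ⟨q, -, hqt, hkq₁, hkq₂⟩ := (exists_mul_add_lt_le_iff (s := 0) (A := 0) (B := t - 1)
      (k := k) (Fintype.card_pos_iff.mpr ⟨i₀⟩)).mpr ⟨by omega, by omega⟩
    obtain ⟨e, he, hce⟩ := hcG.2.2.1 (q + 1) (by omega) (by omega)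
    induction e using Sym2.ind with
    | _ u u' =>
      obtain ⟨j, hj⟩ : k - Fintype.card W * q ∈ Set.range (fun j => τ s(i₀, j)) := by
        rw [hτ i₀, hi₀]
        exact ⟨by omega, by omega⟩
      have hG := G.mem_edgeSet.mp he
      refine ⟨s((u, i₀), (u', j)), (lexComp G T).mem_edgeSet.mpr (Or.inl hG), ?_⟩
      rw [compColoring_of_ne hG.ne, hce, Nat.add_sub_cancel]
      simp only at hj
      omega
  · obtain ⟨u, hu⟩ := hcG.exists_sSup_specS_eq
    obtain ⟨e, he, hce⟩ := hh.2.2.1 (k - Fintype.card W * t) (by omega) (by omega)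
    induction e using Sym2.ind with
    | _ i j =>
      refine ⟨s((u, i), (u, j)),
        (lexComp G T).mem_edgeSet.mpr (Or.inr ⟨rfl, T.mem_edgeSet.mp he⟩), ?_⟩
      rw [compColoring_same, hu, hce]
      omega

theorem isIntCol_compColoring [Nonempty V] (hcG : IsIntCol G cG t) {M : ℕ} (hh : IsIntCol T h M)
    {s : W → ℕ} (hspec : ∀ i, ∃ e, specS T h i = Set.Icc (s i + 1) e) (hsM : ∀ i, s i ≤ M)
    (hs0 : ∃ i, s i = 0)
    (hτ : ∀ i, Function.Injective (fun j => τ s(i, j)) ∧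
      Set.range (fun j => τ s(i, j)) = Set.Icc (s i + 1) (s i + Fintype.card W)) :
    IsIntCol (lexComp G T) (compColoring G cG h τ) (Fintype.card W * t + M) := by
  refine ⟨eProper_compColoring hcG hh.1 hspec hτ,
    fun e he => compColoring_mem_Icc hcG hh hsM (fun i => (hτ i).2) he,
    fun k hk₁ hk₂ => exists_compColoring_eq hcG hh hs0 (fun i => (hτ i).2) hk₁ hk₂,
    fun ⟨u, i⟩ => ?_⟩
  obtain ⟨e, he⟩ := hspec i
  exact specS_compColoring_interval hcG he (hτ i).2

end Composition

lemma intColorable_of_isEmpty {X : Type*} [IsEmpty X] (H : SimpleGraph X) : IntColorable H := by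
  refine ⟨0, fun _ => 0, fun v => isEmptyElim v, fun e _ => ?_, fun k hk h0 => by omega,
    fun v => isEmptyElim v⟩
  induction e using Sym2.ind with
  | _ a _ => exact isEmptyElim a

/-- If G is interval colorable and T is a tree, then G[T] is interval colorable. -/
theorem stmt14 {V W : Type*} [Fintype W] (G : SimpleGraph V) (T : SimpleGraph W)
    (hG : IntColorable G) (hT : T.IsTree) :
    IntColorable (lexComp G T) := by
  classical
  obtain ⟨t, cG, hcG⟩ := hG
  cases isEmpty_or_nonempty V
  · exact intColorable_of_isEmpty _
  obtain ⟨M, h, s, hh, hspec, hsM, hdown⟩ := hT.exists_isIntCol_specS_eq_Icc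
  obtain ⟨τ, hτ⟩ := exists_sym2_coloring_range_eq_Icc hdown
  obtain ⟨i⟩ := hT.connected.nonempty
  exact ⟨_, _, isIntCol_compColoring hcG hh hspec hsM (hdown i 0 (Nat.zero_le _)) hτ⟩
end

section
/- In any interval t-coloring of the lexicographic product G[H] constructed from an interval coloring α_G of G and colorings α_H of H and β of K_2[H] as in the main construction, every vertex (u_i, w_j) satisfies max S((u_i,w_j)) - min S((u_i,w_j)) = deg_{G[H]}((u_i,w_j)) - 1 = deg_G(u_i)·|V(H)| + deg_H(w_j) - 1. -/
open SimpleGraph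

instance {V W : Type*} [DecidableEq V] (G : SimpleGraph V) (H : SimpleGraph W)
    [DecidableRel G.Adj] [DecidableRel H.Adj] : DecidableRel (lexComp G H).Adj :=
  fun a b => inferInstanceAs (Decidable (G.Adj a.1 b.1 ∨ (a.1 = b.1 ∧ H.Adj a.2 b.2)))

/-!
Properness makes the colors at a vertex pairwise distinct, so its spectrum has exactly
`deg v` elements; a finite interval of integers with `n` elements spans `n - 1`. The
neighbours of `(u, w)` in `G[H]` are `N_G(u) × V(H)` together with `{u} × N_H(w)`.
-/

theorem Finset.sSup_sub_sInf_eq_card_sub_one {s : Finset ℕ} (hs : (s : Set ℕ).OrdConnected) :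
    sSup (s : Set ℕ) - sInf (s : Set ℕ) = s.card - 1 := by
  rcases s.eq_empty_or_nonempty with rfl | hne
  · simp
  have hIcc : s = Finset.Icc (s.min' hne) (s.max' hne) := by
    refine Finset.Subset.antisymm (fun x hx => Finset.mem_Icc.2 ⟨s.min'_le x hx, s.le_max' x hx⟩)
      fun k hk => ?_
    exact_mod_cast hs.out (s.min'_mem hne) (s.max'_mem hne) (Finset.mem_Icc.1 hk)
  have hcard : s.card = s.max' hne + 1 - s.min' hne := by
    rw [← Nat.card_Icc]; exact congrArg Finset.card hIcc
  rw [hne.csSup_eq_max', hne.csInf_eq_min', hcard]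
  omega

section Spectrum

variable {V : Type*} {G : SimpleGraph V} {c : Sym2 V → ℕ}

theorem specS_eq_image [DecidableEq V] (v : V) [Fintype (G.neighborSet v)] :
    specS G c v = ((G.neighborFinset v).image fun x => c s(v, x) : Finset ℕ) := by
  ext k
  simp [specS]

theorem EProper.card_image_neighborFinset [DecidableEq V] (hc : EProper G c) (v : V)
    [Fintype (G.neighborSet v)] :
    ((G.neighborFinset v).image fun x => c s(v, x)).card = G.degree v :=
  Finset.card_image_of_injOn fun a ha b hb hab => by
    by_contra hne
    exact hc v a b ((G.mem_neighborFinset v a).1 ha) ((G.mem_neighborFinset v b).1 hb) hne hab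

theorem EProper.sSup_sub_sInf_specS (hc : EProper G c) (v : V) [Fintype (G.neighborSet v)]
    (hv : (specS G c v).OrdConnected) :
    sSup (specS G c v) - sInf (specS G c v) = G.degree v - 1 := by
  classical
  rw [specS_eq_image] at hv ⊢
  rw [Finset.sSup_sub_sInf_eq_card_sub_one hv, hc.card_image_neighborFinset]

theorem IsIntCol.ordConnected_specS {t : ℕ} (hc : IsIntCol G c t) (v : V) :
    (specS G c v).OrdConnected :=
  ⟨fun _ ha _ hb k hk => hc.2.2.2 v _ ha _ hb k hk.1 hk.2⟩

end Spectrum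

theorem lexComp_neighborFinset {V W : Type*} [Fintype V] [Fintype W] [DecidableEq V]
    [DecidableEq W] (G : SimpleGraph V) (H : SimpleGraph W) [DecidableRel G.Adj] [DecidableRel H.Adj]
    (u : V) (w : W) :
    (lexComp G H).neighborFinset (u, w) =
      G.neighborFinset u ×ˢ Finset.univ ∪ {u} ×ˢ H.neighborFinset w := by
  ext ⟨a, b⟩
  rw [mem_neighborFinset]
  simp [lexComp, eq_comm, and_comm]

theorem lexComp_degree {V W : Type*} [Fintype V] [Fintype W] [DecidableEq V]
    (G : SimpleGraph V) (H : SimpleGraph W) [DecidableRel G.Adj] [DecidableRel H.Adj]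
    (u : V) (w : W) :
    (lexComp G H).degree (u, w) = G.degree u * Fintype.card W + H.degree w := by
  classical
  have hdisj : Disjoint (G.neighborFinset u ×ˢ (Finset.univ : Finset W))
      ({u} ×ˢ H.neighborFinset w) :=
    Finset.disjoint_left.2 fun ⟨a, _⟩ h1 h2 => by
      simp only [Finset.mem_product, Finset.mem_singleton, G.mem_neighborFinset] at h1 h2
      exact G.irrefl (h2.1 ▸ h1.1)
  rw [← card_neighborFinset_eq_degree, lexComp_neighborFinset,
    Finset.card_union_of_disjoint hdisj, Finset.card_product, Finset.card_product,
    Finset.card_singleton, Finset.card_univ, one_mul, card_neighborFinset_eq_degree,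
    card_neighborFinset_eq_degree]

/-- In any interval t-coloring of G[H], every vertex (u,w) satisfies
max S − min S = deg_{G[H]}(u,w) − 1 = deg_G(u)·|V(H)| + deg_H(w) − 1. -/
theorem stmt16 {V W : Type*} [Fintype V] [Fintype W] [DecidableEq V]
    (G : SimpleGraph V) (H : SimpleGraph W)
    [DecidableRel G.Adj] [DecidableRel H.Adj]
    (t : ℕ) (c : Sym2 (V × W) → ℕ) (hc : IsIntCol (lexComp G H) c t) :
    ∀ (u : V) (w : W),
      sSup (specS (lexComp G H) c (u, w)) - sInf (specS (lexComp G H) c (u, w)) =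
        (lexComp G H).degree (u, w) - 1 ∧
      (lexComp G H).degree (u, w) = G.degree u * Fintype.card W + H.degree w :=
  fun u w => ⟨hc.1.sSup_sub_sInf_specS (u, w) (hc.ordConnected_specS (u, w)),
    lexComp_degree G H u w⟩
end
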